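/- Let X be a Lévy process and let γ>0 satisfy E[e^{γ X_1}]=1. Then for every x>0, P(τ(x)<∞) ≤ e^{−γ x}, i.e. e^{γ x} P(∃ t≥0 : X_t > x) ≤ 1. -/

import Mathlib

open MeasureTheory ProbabilityTheory Filter Set

/-- A (real-valued) Lévy process: `X 0 = 0` a.s., a.s. càdlàg paths on `[0,∞)`,
and stationary independent increments. -/
structure LevyProcess {Ω : Type*} [MeasurableSpace Ω] (P : Measure Ω)
    (X : ℝ → Ω → ℝ) : Prop where
  meas : ∀ t : ℝ, Measurable (X t)
  init : ∀ᵐ ω ∂P, X 0 ω = 0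
  rightCont : ∀ᵐ ω ∂P, ∀ t : ℝ, 0 ≤ t →
    ContinuousWithinAt (fun s => X s ω) (Set.Ici t) t
  leftLimits : ∀ᵐ ω ∂P, ∀ t : ℝ, 0 < t →
    ∃ l : ℝ, Filter.Tendsto (fun s => X s ω) (nhdsWithin t (Set.Ico 0 t)) (nhds l)
  stat : ∀ s t : ℝ, 0 ≤ s → s ≤ t →
    Measure.map (fun ω => X t ω - X s ω) P = Measure.map (X (t - s)) P
  indep : ∀ s t : ℝ, 0 ≤ s → s ≤ t →
    Indep (⨆ u ∈ Set.Icc (0:ℝ) s, MeasurableSpace.comap (X u) inferInstance)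
      (MeasurableSpace.comap (fun ω => X t ω - X s ω) inferInstance) P

/-- The Laplace exponent `ψ(θ) = log E[exp (θ W)]`. -/
noncomputable def laplaceExponent {Ω : Type*} [MeasurableSpace Ω] (P : Measure Ω)
    (W : Ω → ℝ) (θ : ℝ) : ℝ :=
  Real.log (∫ ω, Real.exp (θ * W ω) ∂P)

/-- The domain `Θ = {θ : E[exp (θ W)] < ∞}` of the Laplace exponent. -/
def laplaceDomain {Ω : Type*} [MeasurableSpace Ω] (P : Measure Ω)
    (W : Ω → ℝ) : Set ℝ :=
  {θ : ℝ | Integrable (fun ω => Real.exp (θ * W ω)) P}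

/-! Independence and stationarity of the increments make `t ↦ E[e^{γ X_t}]` multiplicative on
`[0, ∞)`, so `E[e^{γ X_1}] = 1` forces `E[e^{γ X_t}] = 1` at every nonnegative rational time.
Along each grid `k / N` the process `e^{γ X_{k/N}}` is therefore a martingale, and Doob's maximal
inequality gives `e^{γ x} P(max_{k ≤ n} X_{k/N} > x) ≤ 1`. Right-continuity of the paths lets the
dyadic grids exhaust the event `{∃ t ≥ 0, X_t > x}`, and continuity from below carries the bound
over. -/

open scoped ENNReal NNReal

abbrev pastMeasurableSpace {Ω : Type*} (X : ℝ → Ω → ℝ) (s : ℝ) : MeasurableSpace Ω :=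
  ⨆ u ∈ Set.Icc (0:ℝ) s, MeasurableSpace.comap (X u) inferInstance

section PastMeasurableSpace

variable {Ω : Type*} {X : ℝ → Ω → ℝ}

theorem pastMeasurableSpace_mono (X : ℝ → Ω → ℝ) : Monotone (pastMeasurableSpace X) :=
  fun _ _ hst => biSup_mono fun _ hu => ⟨hu.1, hu.2.trans hst⟩

theorem pastMeasurableSpace_le [MeasurableSpace Ω] (hmeas : ∀ t, Measurable (X t)) (s : ℝ) :
    pastMeasurableSpace X s ≤ ‹MeasurableSpace Ω› :=
  iSup₂_le fun u _ => (hmeas u).comap_le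

theorem measurable_pastMeasurableSpace {u s : ℝ} (hu : u ∈ Set.Icc 0 s) :
    Measurable[pastMeasurableSpace X s] (X u) :=
  Measurable.of_comap_le <| le_iSup₂
    (f := fun u (_ : u ∈ Set.Icc (0:ℝ) s) => MeasurableSpace.comap (X u) inferInstance) u hu

end PastMeasurableSpace

noncomputable def gridFiltration {Ω : Type*} [MeasurableSpace Ω] {X : ℝ → Ω → ℝ}
    (hmeas : ∀ t, Measurable (X t)) (N : ℕ) : Filtration ℕ ‹MeasurableSpace Ω› where
  seq k := pastMeasurableSpace X (k / N)
  mono' _ _ _ := pastMeasurableSpace_mono X (by gcongr)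
  le' _ := pastMeasurableSpace_le hmeas _

theorem mul_measure_iUnion_le_of_monotone {α ι : Type*} [MeasurableSpace α] {μ : Measure α}
    [Preorder ι] [IsDirectedOrder ι] [(atTop : Filter ι).IsCountablyGenerated]
    {s : ι → Set α} (hs : Monotone s) {c b : ℝ≥0∞} (h : ∀ i, c * μ (s i) ≤ b) :
    c * μ (⋃ i, s i) ≤ b := by
  rw [hs.measure_iUnion, ENNReal.mul_iSup]
  exact iSup_le h

theorem ContinuousWithinAt.exists_natCast_div_two_pow_lt {f : ℝ → ℝ} {t x : ℝ} (ht : 0 ≤ t)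
    (hf : ContinuousWithinAt f (Ici t) t) (hx : x < f t) : ∃ m k : ℕ, x < f (k / 2 ^ m) := by
  obtain ⟨δ, hδ, hball⟩ := Metric.mem_nhdsWithin_iff.1 (hf (lt_mem_nhds hx))
  obtain ⟨m, hm⟩ := exists_pow_lt_of_lt_one hδ one_half_lt_one
  have h2m : (0 : ℝ) < 2 ^ m := by positivity
  set k := ⌈t * 2 ^ m⌉₊
  have hlo : t ≤ k / 2 ^ m := (le_div_iff₀ h2m).2 (Nat.le_ceil _)
  have hhi : k / 2 ^ m < t + (1 / 2) ^ m := by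
    rw [div_lt_iff₀ h2m, add_mul, one_div_pow, one_div_mul_cancel h2m.ne']
    exact Nat.ceil_lt_add_one (mul_nonneg ht h2m.le)
  refine ⟨m, k, hball ⟨?_, hlo⟩⟩
  rw [Metric.mem_ball, Real.dist_eq, abs_lt]
  constructor <;> linarith

theorem measure_exists_lt_le_measure_exists_dyadic_lt {Ω : Type*} [MeasurableSpace Ω]
    {P : Measure Ω} {X : ℝ → Ω → ℝ}
    (hcont : ∀ᵐ ω ∂P, ∀ t : ℝ, 0 ≤ t → ContinuousWithinAt (fun s => X s ω) (Ici t) t) (x : ℝ) :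
    P {ω | ∃ t : ℝ, 0 ≤ t ∧ x < X t ω} ≤ P {ω | ∃ m k : ℕ, x < X (k / 2 ^ m) ω} :=
  measure_mono_ae <| hcont.mono fun _ hω ⟨t, ht, hxt⟩ =>
    (hω t ht).exists_natCast_div_two_pow_lt ht hxt

-- `ℝ≥0∞`-valued, so that its multiplicativity in `t` needs no integrability assumptions.
noncomputable def expMoment {Ω : Type*} [MeasurableSpace Ω] (P : Measure Ω)
    (X : ℝ → Ω → ℝ) (γ t : ℝ) : ℝ≥0∞ :=
  ∫⁻ ω, ENNReal.ofReal (Real.exp (γ * X t ω)) ∂P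

theorem measurable_ofReal_exp_const_mul (γ : ℝ) :
    Measurable fun y : ℝ => ENNReal.ofReal (Real.exp (γ * y)) := by
  fun_prop

theorem expMoment_eq_one_of_integral_eq_one {Ω : Type*} [MeasurableSpace Ω] {P : Measure Ω}
    {X : ℝ → Ω → ℝ} {γ t : ℝ} (h : ∫ ω, Real.exp (γ * X t ω) ∂P = 1) :
    expMoment P X γ t = 1 := by
  have hint : Integrable (fun ω => Real.exp (γ * X t ω)) P :=
    Integrable.of_integral_ne_zero (h ▸ one_ne_zero)
  rw [expMoment, ← ofReal_integral_eq_lintegral_ofReal hint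
    (ae_of_all _ fun _ => (Real.exp_pos _).le), h, ENNReal.ofReal_one]

namespace LevyProcess

variable {Ω : Type*} [MeasurableSpace Ω] {P : Measure Ω} {X : ℝ → Ω → ℝ} {γ : ℝ}

theorem lintegral_mul_exp_increment (hX : LevyProcess P X) {s t : ℝ} (hs : 0 ≤ s) (hst : s ≤ t)
    {f : Ω → ℝ≥0∞} (hf : Measurable[pastMeasurableSpace X s] f) :
    ∫⁻ ω, f ω * ENNReal.ofReal (Real.exp (γ * (X t ω - X s ω))) ∂P
      = (∫⁻ ω, f ω ∂P) * expMoment P X γ (t - s) := by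
  have hinc : Measurable fun ω => X t ω - X s ω := (hX.meas t).sub (hX.meas s)
  have hg : Measurable[MeasurableSpace.comap (fun ω => X t ω - X s ω) inferInstance]
      fun ω => ENNReal.ofReal (Real.exp (γ * (X t ω - X s ω))) :=
    (measurable_ofReal_exp_const_mul γ).comp (comap_measurable _)
  rw [lintegral_mul_eq_lintegral_mul_lintegral_of_independent_measurableSpace
    (pastMeasurableSpace_le hX.meas s) hinc.comap_le (hX.indep s t hs hst) hf hg,
    ← lintegral_map (measurable_ofReal_exp_const_mul γ) hinc, hX.stat s t hs hst,
    lintegral_map (measurable_ofReal_exp_const_mul γ) (hX.meas _)]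
  rfl

theorem expMoment_add (hX : LevyProcess P X) {s t : ℝ} (hs : 0 ≤ s) (ht : 0 ≤ t) :
    expMoment P X γ (s + t) = expMoment P X γ s * expMoment P X γ t := by
  have h := hX.lintegral_mul_exp_increment (γ := γ) hs (le_add_of_nonneg_right ht)
    ((measurable_ofReal_exp_const_mul γ).comp (measurable_pastMeasurableSpace ⟨hs, le_rfl⟩))
  rw [add_sub_cancel_left] at h
  refine Eq.trans (lintegral_congr fun ω => ?_) h
  rw [Function.comp_apply, ← ENNReal.ofReal_mul (Real.exp_nonneg _), ← Real.exp_add]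
  ring_nf

theorem expMoment_zero [IsProbabilityMeasure P] (hX : LevyProcess P X) :
    expMoment P X γ 0 = 1 := by
  have h : (fun ω => ENNReal.ofReal (Real.exp (γ * X 0 ω))) =ᵐ[P] fun _ => 1 := by
    filter_upwards [hX.init] with ω h
    simp [h]
  rw [expMoment, lintegral_congr_ae h, lintegral_one, measure_univ]

theorem expMoment_natCast_mul [IsProbabilityMeasure P] (hX : LevyProcess P X) (k : ℕ)
    {a : ℝ} (ha : 0 ≤ a) : expMoment P X γ (k * a) = expMoment P X γ a ^ k := by
  induction k with
  | zero => simpa using hX.expMoment_zero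
  | succ n ih =>
    rw [Nat.cast_succ, add_one_mul, hX.expMoment_add (by positivity) ha, ih, pow_succ]

theorem expMoment_natCast_div_eq_one [IsProbabilityMeasure P] (hX : LevyProcess P X)
    (h1 : expMoment P X γ 1 = 1) (k N : ℕ) : expMoment P X γ (k / N) = 1 := by
  rcases N.eq_zero_or_pos with rfl | hN
  · simpa using hX.expMoment_zero
  have hunit : expMoment P X γ (1 / N) = 1 := by
    have hpow : expMoment P X γ (1 / N) ^ N = 1 ^ N := by
      rw [← hX.expMoment_natCast_mul N (by positivity), mul_one_div_cancel (by positivity), h1,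
        one_pow]
    exact (ENNReal.pow_right_strictMono hN.ne').injective hpow
  rw [div_eq_mul_one_div (k : ℝ), hX.expMoment_natCast_mul k (by positivity), hunit, one_pow]

theorem setLIntegral_exp_eq_mul_expMoment (hX : LevyProcess P X) {u t : ℝ} (hu : 0 ≤ u)
    (hut : u ≤ t) {s : Set Ω} (hs : MeasurableSet[pastMeasurableSpace X u] s) :
    ∫⁻ ω in s, ENNReal.ofReal (Real.exp (γ * X t ω)) ∂P
      = (∫⁻ ω in s, ENNReal.ofReal (Real.exp (γ * X u ω)) ∂P) * expMoment P X γ (t - u) := by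
  have hs' : MeasurableSet s := pastMeasurableSpace_le hX.meas u s hs
  have hf : Measurable[pastMeasurableSpace X u]
      (s.indicator fun ω => ENNReal.ofReal (Real.exp (γ * X u ω))) :=
    ((measurable_ofReal_exp_const_mul γ).comp
      (measurable_pastMeasurableSpace ⟨hu, le_rfl⟩)).indicator hs
  rw [← lintegral_indicator hs', ← lintegral_indicator hs',
    ← hX.lintegral_mul_exp_increment hu hut hf]
  refine lintegral_congr fun ω => ?_
  by_cases hω : ω ∈ s
  · rw [indicator_of_mem hω, indicator_of_mem hω, ← ENNReal.ofReal_mul (Real.exp_nonneg _),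
      ← Real.exp_add]
    ring_nf
  · rw [indicator_of_notMem hω, indicator_of_notMem hω, zero_mul]

theorem integrable_exp_grid [IsProbabilityMeasure P] (hX : LevyProcess P X)
    (h1 : expMoment P X γ 1 = 1) (k N : ℕ) :
    Integrable (fun ω => Real.exp (γ * X (k / N) ω)) P := by
  refine ⟨((hX.meas _).const_mul γ).exp.aestronglyMeasurable,
    (hasFiniteIntegral_iff_ofReal (ae_of_all _ fun _ => (Real.exp_pos _).le)).2 ?_⟩
  change expMoment P X γ (k / N) < ∞
  simp [hX.expMoment_natCast_div_eq_one h1]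

theorem martingale_exp_grid [IsProbabilityMeasure P] (hX : LevyProcess P X)
    (h1 : expMoment P X γ 1 = 1) (N : ℕ) :
    Martingale (fun (k : ℕ) ω => Real.exp (γ * X (k / N) ω)) (gridFiltration hX.meas N) P := by
  have hk0 (k : ℕ) : (0 : ℝ) ≤ k / N := by positivity
  refine martingale_of_setIntegral_eq_succ
    (fun k =>
      ((measurable_pastMeasurableSpace ⟨hk0 k, le_rfl⟩).const_mul γ).exp.stronglyMeasurable)
    (fun k => hX.integrable_exp_grid h1 k N) fun k s hs => ?_
  have hstep : ((k + 1 : ℕ) : ℝ) / N - k / N = (1 : ℕ) / N := by push_cast; ring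
  rw [integral_eq_lintegral_of_nonneg_ae (ae_of_all _ fun _ => (Real.exp_pos _).le)
      (hX.integrable_exp_grid h1 k N).aestronglyMeasurable.restrict,
    integral_eq_lintegral_of_nonneg_ae (ae_of_all _ fun _ => (Real.exp_pos _).le)
      (hX.integrable_exp_grid h1 (k + 1) N).aestronglyMeasurable.restrict,
    hX.setLIntegral_exp_eq_mul_expMoment (t := (k + 1 : ℕ) / N) (hk0 k) (by gcongr; omega) hs,
    hstep,
    hX.expMoment_natCast_div_eq_one h1, mul_one]

theorem ofReal_exp_mul_measure_exists_grid_le_one [IsProbabilityMeasure P]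
    (hX : LevyProcess P X) (hγ : 0 ≤ γ) (h1 : expMoment P X γ 1 = 1) (x : ℝ) (N n : ℕ) :
    ENNReal.ofReal (Real.exp (γ * x)) * P {ω | ∃ k ≤ n, x < X (k / N) ω} ≤ 1 := by
  set Y : ℕ → Ω → ℝ := fun k ω => Real.exp (γ * X (k / N) ω)
  set ε : ℝ≥0 := (Real.exp (γ * x)).toNNReal
  have hε : (ε : ℝ) = Real.exp (γ * x) := Real.coe_toNNReal _ (Real.exp_nonneg _)
  have hsub : {ω | ∃ k ≤ n, x < X (k / N) ω}
      ⊆ {ω | (ε : ℝ) ≤ (Finset.range (n + 1)).sup' Finset.nonempty_range_add_one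
          fun k => Y k ω} := by
    rintro ω ⟨k, hkn, hk⟩
    show (ε : ℝ) ≤ _
    rw [hε]
    refine Finset.le_sup'_of_le _ (Finset.mem_range_succ_iff.2 hkn) ?_
    exact Real.exp_le_exp.2 (mul_le_mul_of_nonneg_left hk.le hγ)
  have hYn : ∫ ω, Y n ω ∂P = 1 := by
    rw [integral_eq_lintegral_of_nonneg_ae (ae_of_all _ fun _ => (Real.exp_pos _).le)
      (hX.integrable_exp_grid h1 n N).aestronglyMeasurable]
    change (expMoment P X γ (n / N)).toReal = 1
    simp [hX.expMoment_natCast_div_eq_one h1]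
  calc ENNReal.ofReal (Real.exp (γ * x)) * P {ω | ∃ k ≤ n, x < X (k / N) ω}
      ≤ ε * P {ω | (ε : ℝ) ≤ (Finset.range (n + 1)).sup' Finset.nonempty_range_add_one
          fun k => Y k ω} := mul_le_mul_right (measure_mono hsub) _
    _ ≤ ENNReal.ofReal (∫ ω in {ω | (ε : ℝ) ≤ (Finset.range (n + 1)).sup'
          Finset.nonempty_range_add_one fun k => Y k ω}, Y n ω ∂P) :=
        maximal_ineq (hX.martingale_exp_grid h1 N).submartingale
          (fun _ _ => (Real.exp_pos _).le) n
    _ ≤ ENNReal.ofReal (∫ ω, Y n ω ∂P) := ENNReal.ofReal_le_ofReal <|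
        setIntegral_le_integral (hX.integrable_exp_grid h1 n N)
          (ae_of_all _ fun _ => (Real.exp_pos _).le)
    _ = 1 := by rw [hYn, ENNReal.ofReal_one]

theorem ofReal_exp_mul_measure_exists_dyadic_le_one [IsProbabilityMeasure P]
    (hX : LevyProcess P X) (hγ : 0 ≤ γ) (h1 : expMoment P X γ 1 = 1) (x : ℝ) :
    ENNReal.ofReal (Real.exp (γ * x)) * P {ω | ∃ m k : ℕ, x < X (k / 2 ^ m) ω} ≤ 1 := by
  have hrefine : Monotone fun m : ℕ => {ω | ∃ k : ℕ, x < X (k / 2 ^ m) ω} := by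
    refine monotone_nat_of_le_succ fun m _ ⟨k, hk⟩ => ⟨2 * k, ?_⟩
    rwa [show ((2 * k : ℕ) : ℝ) / 2 ^ (m + 1) = k / 2 ^ m by push_cast; field_simp; ring]
  have hgrid (m : ℕ) : {ω | ∃ k : ℕ, x < X (k / 2 ^ m) ω}
      = ⋃ n : ℕ, {ω | ∃ k ≤ n, x < X (k / (2 ^ m : ℕ)) ω} := by
    ext ω
    simp only [mem_ofPred_eq, mem_iUnion, Nat.cast_pow, Nat.cast_ofNat]
    exact ⟨fun ⟨k, hk⟩ => ⟨k, k, le_rfl, hk⟩, fun ⟨_, k, _, hk⟩ => ⟨k, hk⟩⟩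
  rw [ofPred_exists]
  refine mul_measure_iUnion_le_of_monotone hrefine fun m => ?_
  rw [hgrid]
  exact mul_measure_iUnion_le_of_monotone (fun _ _ hn =>
      ofPred_subset_ofPred.2 fun _ ⟨k, hk, hxk⟩ => ⟨k, hk.trans hn, hxk⟩)
    fun n => hX.ofReal_exp_mul_measure_exists_grid_le_one hγ h1 x _ n

end LevyProcess

/-- Lundberg bound: if `E[e^{γ X₁}] = 1` with `γ > 0`, then for every `x > 0`,
`e^{γ x} P(τ(x) < ∞) ≤ 1`, where `{τ(x) < ∞} = {∃ t ≥ 0, X_t > x}`. -/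
theorem lundberg_bound
    {Ω : Type*} [MeasurableSpace Ω] (P : Measure Ω) [IsProbabilityMeasure P]
    (X : ℝ → Ω → ℝ) (hX : LevyProcess P X)
    (γ : ℝ) (hγpos : 0 < γ)
    (hγ : ∫ ω, Real.exp (γ * X 1 ω) ∂P = 1) :
    ∀ x : ℝ, 0 < x →
      Real.exp (γ * x) * (P {ω | ∃ t : ℝ, 0 ≤ t ∧ x < X t ω}).toReal ≤ 1 := by
  intro x _
  have hbound : ENNReal.ofReal (Real.exp (γ * x)) * P {ω | ∃ t : ℝ, 0 ≤ t ∧ x < X t ω} ≤ 1 :=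
    (mul_le_mul_right (measure_exists_lt_le_measure_exists_dyadic_lt hX.rightCont x) _).trans
      (hX.ofReal_exp_mul_measure_exists_dyadic_le_one hγpos.le
        (expMoment_eq_one_of_integral_eq_one hγ) x)
  simpa [ENNReal.toReal_mul, Real.exp_nonneg] using ENNReal.toReal_mono ENNReal.one_ne_top hbound
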